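/- Let (X,d,μ) be a locally compact metric measure space. Then for every Lipschitz function u : X → ℝ with Lipschitz constant Lip(u), every compactly supported continuous function φ on X, and every r > 0: |∫_X φ · (Δ_{μ,r}u − Δ̃_{μ,r}u) dμ| ≤ (Lip(u)/2) ∫_X |φ| · (z_r/r) dμ, where the right-hand side may be +∞. -/

import Mathlib

open MeasureTheory Filter Metric Set
open scoped ENNReal Topology NNReal

/-- The AMV `r`-operator for a continuous function (`u*(x) = u(x)`). -/
noncomputable def amvOp {X : Type*} [MetricSpace X] [MeasurableSpace X]
    (μ : Measure X) (u : X → ℝ) (x : X) (r : ℝ) : ℝ :=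
  (1 / r ^ 2) * ⨍ y in ball x r, (u y - u x) ∂μ

/-- The SAMV `r`-operator for a continuous function (`u*(x) = u(x)`). -/
noncomputable def samvOp {X : Type*} [MetricSpace X] [MeasurableSpace X]
    (μ : Measure X) (u : X → ℝ) (x : X) (r : ℝ) : ℝ :=
  (1 / (2 * r ^ 2)) *
    ⨍ y in ball x r, (u y - u x) * (1 + (μ (ball x r)).toReal / (μ (ball y r)).toReal) ∂μ

/-- The averaged absolute distortion `z_r(x) = ⨍_{B_r(x)} |1 − μ(B_r(x))/μ(B_r(y))| dμ(y)`. -/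
noncomputable def zr {X : Type*} [MetricSpace X] [MeasurableSpace X]
    (μ : Measure X) (x : X) (r : ℝ) : ℝ :=
  ⨍ y in ball x r, |1 - (μ (ball x r)).toReal / (μ (ball y r)).toReal| ∂μ

/-!
Write `ρ(y) = μ(B_r(x)) / μ(B_r(y))`. At a point `x`, the difference of the two operators is
`(2r²)⁻¹ ⨍_{B_r(x)} (u(y) - u(x)) (1 - ρ(y)) dμ(y)`, and `|u(y) - u(x)| ≤ Lip(u) r` on the ball
gives `|Δ_{μ,r}u(x) - Δ̃_{μ,r}u(x)| ≤ Lip(u) z_r(x) / (2r)`, as long as `ρ` is integrable on `B_r(x)`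
(a non-integrable average is a junk zero). Integrability holds at almost every point of the compact
support `A` of `φ`: by Tonelli,
`∫_A ∫_{B_r(x)} μ(B_r(y))⁻¹ dμ(y) dμ(x) ≤ ∫_{A_r} μ(A ∩ B_r(y)) / μ(B_r(y)) dμ(y) ≤ μ(A_r) < ∞`,
where `A_r` is the `r`-thickening of `A`. Integrating the pointwise bound against `|φ|` concludes.
-/

section PseudoMetric

open TopologicalSpace

variable {X : Type*} [PseudoMetricSpace X] [MeasurableSpace X]

theorem lowerSemicontinuous_measure_ball (μ : Measure X) (r : ℝ) :
    LowerSemicontinuous fun x => μ (ball x r) := by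
  intro x c hc
  have hunion : ⋃ n : ℕ, ball x (r - 1 / (n + 1)) = ball x r := by
    ext y
    simp only [mem_iUnion, mem_ball]
    refine ⟨fun ⟨n, hn⟩ => hn.trans_le (by simp; positivity), fun hy => ?_⟩
    obtain ⟨n, hn⟩ := exists_nat_one_div_lt (sub_pos.mpr hy)
    exact ⟨n, by linarith⟩
  have hmono : Monotone fun n : ℕ => ball x (r - 1 / (n + 1)) := fun m n hmn =>
    ball_subset_ball (by gcongr)
  change c < μ (ball x r) at hc
  rw [← hunion, hmono.measure_iUnion, lt_iSup_iff] at hc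
  obtain ⟨n, hn⟩ := hc
  filter_upwards [ball_mem_nhds x (Nat.one_div_pos_of_nat (n := n))] with x' hx'
  exact hn.trans_le <| measure_mono <| ball_subset_ball' <| by
    rw [dist_comm]; linarith [mem_ball.mp hx']

theorem Bornology.IsBounded.measure_thickening_lt_top {μ : Measure X}
    (hμ : ∀ x R, 0 < R → μ (ball x R) < ∞) {A : Set X} (hA : IsBounded A) (r : ℝ) :
    μ (thickening r A) < ∞ := by
  rcases A.eq_empty_or_nonempty with rfl | ⟨x₀, -⟩
  · simp
  obtain ⟨R, hR, hsub⟩ := (hA.thickening (δ := r)).subset_ball_lt 0 x₀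
  exact (measure_mono hsub).trans_lt (hμ x₀ R hR)

variable [OpensMeasurableSpace X]

theorem measurable_measure_ball (μ : Measure X) (r : ℝ) : Measurable fun x => μ (ball x r) :=
  (lowerSemicontinuous_measure_ball μ r).measurable

theorem measurable_setLIntegral_ball (μ : Measure X) (f : X → ℝ≥0∞) (r : ℝ) :
    Measurable fun x => ∫⁻ y in ball x r, f y ∂μ := by
  simpa only [withDensity_apply f measurableSet_ball] using
    measurable_measure_ball (μ.withDensity f) r

/-- The open set `{dist < r}` need not be measurable for the product σ-algebra on `X × X`, but over
a separable set of first coordinates it agrees with a countable union of rectangles. -/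
theorem TopologicalSpace.IsSeparable.exists_measurableSet_dist_lt {A : Set X}
    (hA : IsSeparable A) (r : ℝ) :
    ∃ S : Set (X × X), MeasurableSet S ∧ (∀ p ∈ S, dist p.1 p.2 < r) ∧
      ∀ x ∈ A, ∀ y, dist x y < r → (x, y) ∈ S := by
  obtain ⟨Q, hQ, hAQ⟩ := hA
  refine ⟨⋃ q ∈ Q, ⋃ s : ℚ, ball q s ×ˢ ball q (r - s),
    .biUnion hQ fun q _ => .iUnion fun s => measurableSet_ball.prod measurableSet_ball, ?_, ?_⟩
  · simp only [mem_iUnion, mem_prod, mem_ball]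
    rintro ⟨x, y⟩ ⟨q, -, s, hxq, hyq⟩
    linarith [dist_triangle_right x y q]
  · intro x hx y hxy
    have hε : 0 < (r - dist x y) / 2 := by linarith
    obtain ⟨q, hqQ, hxq⟩ := Metric.mem_closure_iff.mp (hAQ hx) _ hε
    obtain ⟨s, hqs, hsε⟩ := exists_rat_btwn hxq
    simp only [mem_iUnion, mem_prod, mem_ball]
    refine ⟨q, hqQ, s, hqs, ?_⟩
    linarith [dist_triangle y x q, dist_comm x y]

theorem lintegral_setLIntegral_inv_measure_ball_le (μ : Measure X) {A : Set X}
    (hA : IsSeparable A) {r : ℝ} (hr : 0 < r) :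
    ∫⁻ x in A, ∫⁻ y in ball x r, (μ (ball y r))⁻¹ ∂μ ∂μ ≤ μ (thickening r A) := by
  set A' := thickening r A
  rcases eq_top_or_lt_top (μ A') with hA' | hA'
  · exact hA' ▸ le_top
  have hAA' : A ⊆ A' := self_subset_thickening hr A
  have : IsFiniteMeasure (μ.restrict A') := isFiniteMeasure_restrict.mpr hA'.ne
  have : IsFiniteMeasure (μ.restrict A) :=
    isFiniteMeasure_restrict.mpr ((measure_mono hAA').trans_lt hA').ne
  obtain ⟨S, hSm, hS_lt, hS_mem⟩ := hA.exists_measurableSet_dist_lt r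
  set G : X → ℝ≥0∞ := fun y => (μ (ball y r))⁻¹
  set k : X → X → ℝ≥0∞ := fun x y => S.indicator (fun p => G p.2) (x, y)
  have hk : Measurable (Function.uncurry k) :=
    ((measurable_measure_ball μ r).inv.comp measurable_snd).indicator hSm
  have hk_left : ∀ x ∈ A, ∫⁻ y in ball x r, G y ∂μ ≤ ∫⁻ y in A', k x y ∂μ := by
    intro x hx
    have hball : ball x r ⊆ A' := fun y hy => mem_thickening_iff.mpr ⟨x, hx, mem_ball.mp hy⟩
    calc ∫⁻ y in ball x r, G y ∂μ = ∫⁻ y in ball x r, k x y ∂μ :=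
          setLIntegral_congr_fun measurableSet_ball fun y hy =>
            (indicator_of_mem (hS_mem x hx y (mem_ball'.mp hy)) (fun p => G p.2)).symm
      _ ≤ ∫⁻ y in A', k x y ∂μ := lintegral_mono_set hball
  have hk_right : ∀ y, ∫⁻ x in A, k x y ∂μ ≤ 1 := by
    intro y
    calc ∫⁻ x in A, k x y ∂μ ≤ ∫⁻ x in A, (ball y r).indicator (fun _ => G y) x ∂μ := by
          refine lintegral_mono fun x => ?_
          by_cases hxy : (x, y) ∈ S
          · simp [k, indicator_of_mem hxy, indicator_of_mem (mem_ball.mpr (hS_lt _ hxy))]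
          · simp [k, indicator_of_notMem hxy]
      _ = G y * μ.restrict A (ball y r) := lintegral_indicator_const measurableSet_ball _
      _ ≤ G y * μ (ball y r) := by gcongr; apply Measure.restrict_apply_le
      _ ≤ 1 := ENNReal.inv_mul_le_one _
  calc ∫⁻ x in A, ∫⁻ y in ball x r, G y ∂μ ∂μ ≤ ∫⁻ x in A, ∫⁻ y in A', k x y ∂μ ∂μ :=
        setLIntegral_mono hk.lintegral_prod_right hk_left
    _ = ∫⁻ y in A', ∫⁻ x in A, k x y ∂μ ∂μ := lintegral_lintegral_swap hk.aemeasurable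
    _ ≤ ∫⁻ _ in A', 1 ∂μ := lintegral_mono hk_right
    _ = μ A' := by simp

theorem ae_integrableOn_inv_measure_ball (μ : Measure X) {A : Set X} (hA : IsSeparable A)
    (hAm : MeasurableSet A) {r : ℝ} (hr : 0 < r) (hfin : μ (thickening r A) ≠ ∞) :
    ∀ᵐ x ∂μ, x ∈ A → IntegrableOn (fun y => (μ (ball y r)).toReal⁻¹) (ball x r) μ := by
  rw [← ae_restrict_iff' hAm]
  have hlt : ∀ᵐ x ∂μ.restrict A, ∫⁻ y in ball x r, (μ (ball y r))⁻¹ ∂μ < ∞ :=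
    ae_lt_top (measurable_setLIntegral_ball μ _ r)
      (ne_top_of_le_ne_top hfin (lintegral_setLIntegral_inv_measure_ball_le μ hA hr))
  filter_upwards [hlt] with x hx
  simp_rw [← ENNReal.toReal_inv]
  exact integrable_toReal_of_lintegral_ne_top
    (measurable_measure_ball μ r).inv.aemeasurable hx.ne

end PseudoMetric

theorem abs_setAverage_mul_le_mul_setAverage_abs {X : Type*} [MeasurableSpace X]
    {μ : Measure X} {s : Set X} (hs : MeasurableSet s) {g h : X → ℝ} {M : ℝ}
    (hg : ∀ y ∈ s, |g y| ≤ M) (hh : IntegrableOn h s μ) :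
    |⨍ y in s, g y * h y ∂μ| ≤ M * ⨍ y in s, |h y| ∂μ := by
  rw [setAverage_eq, setAverage_eq, smul_eq_mul, smul_eq_mul, abs_mul,
    abs_of_nonneg (inv_nonneg.2 measureReal_nonneg), mul_left_comm]
  gcongr
  calc |∫ y in s, g y * h y ∂μ| ≤ ∫ y in s, M * |h y| ∂μ :=
        norm_integral_le_of_norm_le (hh.abs.const_mul M) <| (ae_restrict_mem hs).mono fun y hy => by
          rw [Real.norm_eq_abs, abs_mul]
          exact mul_le_mul_of_nonneg_right (hg y hy) (abs_nonneg _)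
    _ = M * ∫ y in s, |h y| ∂μ := integral_const_mul M _

theorem abs_amvOp_sub_samvOp_le {X : Type*} [MetricSpace X] [MeasurableSpace X]
    [OpensMeasurableSpace X] {μ : Measure X} {u : X → ℝ} {K : ℝ≥0} (hu : LipschitzWith K u)
    {x : X} {r : ℝ} (hr : 0 < r) (hfin : μ (ball x r) ≠ ∞)
    (hint : IntegrableOn (fun y => (μ (ball y r)).toReal⁻¹) (ball x r) μ) :
    |amvOp μ u x r - samvOp μ u x r| ≤ (K : ℝ) / 2 * (zr μ x r / r) := by
  set c := (μ (ball x r)).toReal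
  set g : X → ℝ := fun y => u y - u x
  set ρ : X → ℝ := fun y => c / (μ (ball y r)).toReal
  have hg_le : ∀ y ∈ ball x r, |g y| ≤ K * r := fun y hy =>
    (hu.dist_le_mul y x).trans (by gcongr; exact (mem_ball.mp hy).le)
  have hg_int : IntegrableOn g (ball x r) μ :=
    Measure.integrableOn_of_bounded hfin
      (hu.continuous.measurable.sub_const _).aestronglyMeasurable
      ((ae_restrict_mem measurableSet_ball).mono hg_le)
  have hρ_int : IntegrableOn ρ (ball x r) μ := by
    simp only [ρ, div_eq_mul_inv]
    exact hint.const_mul c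
  have hgρ_int : IntegrableOn (fun y => g y * ρ y) (ball x r) μ :=
    hρ_int.bdd_mul hg_int.aestronglyMeasurable ((ae_restrict_mem measurableSet_ball).mono hg_le)
  have hdiff : amvOp μ u x r - samvOp μ u x r =
      1 / (2 * r ^ 2) * ⨍ y in ball x r, g y * (1 - ρ y) ∂μ := by
    change 1 / r ^ 2 * ⨍ y in ball x r, g y ∂μ -
      1 / (2 * r ^ 2) * ⨍ y in ball x r, g y * (1 + ρ y) ∂μ = _
    have hadd : ∫ y in ball x r, g y * (1 + ρ y) ∂μ =
        ∫ y in ball x r, g y ∂μ + ∫ y in ball x r, g y * ρ y ∂μ := by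
      rw [← integral_add hg_int hgρ_int]; simp only [mul_add, mul_one]
    have hsub : ∫ y in ball x r, g y * (1 - ρ y) ∂μ =
        ∫ y in ball x r, g y ∂μ - ∫ y in ball x r, g y * ρ y ∂μ := by
      rw [← integral_sub hg_int hgρ_int]; simp only [mul_sub, mul_one]
    simp only [setAverage_eq, smul_eq_mul, hadd, hsub]
    ring
  have hbound : |⨍ y in ball x r, g y * (1 - ρ y) ∂μ| ≤ K * r * zr μ x r :=
    abs_setAverage_mul_le_mul_setAverage_abs measurableSet_ball hg_le
      ((integrableOn_const hfin).sub hρ_int)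
  calc |amvOp μ u x r - samvOp μ u x r| ≤ 1 / (2 * r ^ 2) * (K * r * zr μ x r) := by
        rw [hdiff, abs_mul, abs_of_nonneg (by positivity)]
        gcongr
    _ = (K : ℝ) / 2 * (zr μ x r / r) := by
        field_simp

theorem stmt_8_general {X : Type*} [MetricSpace X] [MeasurableSpace X] [BorelSpace X]
    (μ : Measure X)
    (hμ : ∀ (x : X) (r : ℝ), 0 < r → 0 < μ (ball x r) ∧ μ (ball x r) < ∞)
    (u : X → ℝ) (K : ℝ≥0) (hu : LipschitzWith K u)
    (φ : X → ℝ) (hφs : HasCompactSupport φ)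
    (r : ℝ) (hr : 0 < r) :
    ENNReal.ofReal |∫ x, φ x * (amvOp μ u x r - samvOp μ u x r) ∂μ| ≤
      ENNReal.ofReal ((K : ℝ) / 2) * ∫⁻ x, ENNReal.ofReal (|φ x| * (zr μ x r / r)) ∂μ := by
  have hint := ae_integrableOn_inv_measure_ball μ hφs.isSeparable
    (isClosed_tsupport φ).measurableSet hr
    (hφs.isBounded.measure_thickening_lt_top (fun x R hR => (hμ x R hR).2) r).ne
  have hpointwise : ∀ᵐ x ∂μ, ‖φ x * (amvOp μ u x r - samvOp μ u x r)‖ₑ ≤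
      ENNReal.ofReal ((K : ℝ) / 2) * ENNReal.ofReal (|φ x| * (zr μ x r / r)) := by
    filter_upwards [hint] with x hx
    rw [← ENNReal.ofReal_mul (by positivity), Real.enorm_eq_ofReal_abs, abs_mul]
    rcases eq_or_ne (φ x) 0 with h0 | h0
    · simp [h0]
    refine ENNReal.ofReal_le_ofReal ?_
    have hbound := abs_amvOp_sub_samvOp_le hu hr (hμ x r hr).2.ne (hx (subset_tsupport φ h0))
    simpa only [mul_left_comm] using mul_le_mul_of_nonneg_left hbound (abs_nonneg (φ x))
  calc ENNReal.ofReal |∫ x, φ x * (amvOp μ u x r - samvOp μ u x r) ∂μ|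
      = ‖∫ x, φ x * (amvOp μ u x r - samvOp μ u x r) ∂μ‖ₑ := (Real.enorm_eq_ofReal_abs _).symm
    _ ≤ ∫⁻ x, ‖φ x * (amvOp μ u x r - samvOp μ u x r)‖ₑ ∂μ := enorm_integral_le_lintegral_enorm _
    _ ≤ ∫⁻ x, ENNReal.ofReal ((K : ℝ) / 2) * ENNReal.ofReal (|φ x| * (zr μ x r / r)) ∂μ :=
        lintegral_mono_ae hpointwise
    _ = ENNReal.ofReal ((K : ℝ) / 2) * ∫⁻ x, ENNReal.ofReal (|φ x| * (zr μ x r / r)) ∂μ :=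
        lintegral_const_mul' _ _ ENNReal.ofReal_ne_top

/-- On a locally compact metric measure space, for every Lipschitz `u`, every
compactly supported continuous `φ` and every `r > 0`:
`|∫ φ (Δ_{μ,r}u − Δ̃_{μ,r}u) dμ| ≤ (Lip(u)/2) ∫ |φ| z_r/r dμ`, the right-hand side possibly
being `+∞`. -/
theorem stmt_8 {X : Type*} [MetricSpace X] [MeasurableSpace X] [BorelSpace X]
    [LocallyCompactSpace X]
    (μ : Measure X)
    (hμ : ∀ (x : X) (r : ℝ), 0 < r → 0 < μ (ball x r) ∧ μ (ball x r) < ∞)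
    (u : X → ℝ) (K : ℝ≥0) (hu : LipschitzWith K u)
    (φ : X → ℝ) (hφc : Continuous φ) (hφs : HasCompactSupport φ)
    (r : ℝ) (hr : 0 < r) :
    ENNReal.ofReal |∫ x, φ x * (amvOp μ u x r - samvOp μ u x r) ∂μ| ≤
      ENNReal.ofReal ((K : ℝ) / 2) * ∫⁻ x, ENNReal.ofReal (|φ x| * (zr μ x r / r)) ∂μ :=
  stmt_8_general μ hμ u K hu φ hφs r hr
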